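/- Suppose Assumption (A2) holds. Then for every x ∈ ℝ^d, every y ∈ [0,1]^{d_y} and every t > 0: C ≤ h(x,y,t) ≤ B, and ‖(σ̂_t/α̂_t) · ∇_x h(x,y,t)‖_∞ ≤ √(2/π) · B. -/

import Mathlib

open MeasureTheory

noncomputable section

namespace CDM

/-- The ReLU activation function. -/
def relu (x : ℝ) : ℝ := max x 0

/-- The Euclidean norm `‖x‖₂` of a vector `x ∈ ℝ^n`. -/
def norm2 {n : ℕ} (x : Fin n → ℝ) : ℝ := Real.sqrt (∑ i, x i ^ 2)

/-- The sup norm `‖x‖_∞` of a vector `x ∈ ℝ^n`. -/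
def normInf {n : ℕ} (x : Fin n → ℝ) : ℝ := ⨆ i, |x i|

/-- A feedforward ReLU network with `depth` affine layers, computing
`x ↦ (A_{L-1} ReLU(·) + b_{L-1}) ∘ ⋯ ∘ (A_0 x + b_0)`. -/
structure ReLUNet (din dout : ℕ) where
  depth : ℕ
  dims : ℕ → ℕ
  A : (k : ℕ) → Matrix (Fin (dims (k + 1))) (Fin (dims k)) ℝ
  b : (k : ℕ) → Fin (dims (k + 1)) → ℝ
  depth_pos : 1 ≤ depth
  dims_in : dims 0 = din
  dims_out : dims depth = dout

def ReLUNet.evalAux {din dout : ℕ} (net : ReLUNet din dout)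
    (x : Fin (net.dims 0) → ℝ) : (k : ℕ) → Fin (net.dims k) → ℝ
  | 0 => x
  | k + 1 => fun i =>
      (∑ j, net.A k i j *
        (if k = 0 then ReLUNet.evalAux net x k j
         else relu (ReLUNet.evalAux net x k j))) + net.b k i

/-- The function computed by a ReLU network. -/
def ReLUNet.eval {din dout : ℕ} (net : ReLUNet din dout) (x : Fin din → ℝ) :
    Fin dout → ℝ :=
  fun i => net.evalAux (fun j => x (Fin.cast net.dims_in j)) net.depth
    (Fin.cast net.dims_out.symm i)

/-- The number of nonzero parameters of a ReLU network. -/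
def ReLUNet.sparsity {din dout : ℕ} (net : ReLUNet din dout) : ℕ :=
  ∑ k ∈ Finset.range net.depth,
    (Nat.card {q : Fin (net.dims (k + 1)) × Fin (net.dims k) // net.A k q.1 q.2 ≠ 0} +
      Nat.card {i : Fin (net.dims (k + 1)) // net.b k i ≠ 0})

/-- Size constraints on a ReLU network: depth at most `L`, widths at most `W`,
parameter magnitudes at most `κ`, at most `K` nonzero parameters. -/
def ReLUNet.HasSize {din dout : ℕ} (net : ReLUNet din dout)
    (W : ℕ) (κ : ℝ) (L K : ℕ) : Prop :=
  net.depth ≤ L ∧ (∀ k ≤ net.depth, net.dims k ≤ W) ∧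
    (∀ k < net.depth, (∀ i j, |net.A k i j| ≤ κ) ∧ ∀ i, |net.b k i| ≤ κ) ∧
    net.sparsity ≤ K

/-- The class `𝓕(M_t, W, κ, L, K)` of conditional score networks,
taking inputs `(x, y, t) ∈ ℝ^d × ℝ^{d_y} × ℝ` and values in `ℝ^d`. -/
def InScoreClass (d dy : ℕ) (M : ℝ → ℝ) (W : ℕ) (κ : ℝ) (L K : ℕ)
    (s : (Fin d → ℝ) → (Fin dy → ℝ) → ℝ → Fin d → ℝ) : Prop :=
  ∃ net : ReLUNet (d + dy + 1) d, net.HasSize W κ L K ∧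
    (∀ x y t, s x y t = net.eval (Fin.append (Fin.append x y) ![t])) ∧
    ∀ t x y i, |s x y t i| ≤ M t

/-- The class of unconditional score networks, with inputs `(x, t)`. -/
def InScoreClass2 (d : ℕ) (M : ℝ → ℝ) (W : ℕ) (κ : ℝ) (L K : ℕ)
    (s : (Fin d → ℝ) → ℝ → Fin d → ℝ) : Prop :=
  ∃ net : ReLUNet (d + 1) d, net.HasSize W κ L K ∧
    (∀ x t, s x t = net.eval (Fin.append x ![t])) ∧
    ∀ t x i, |s x t i| ≤ M t

/-- `α_t = e^{-t/2}`. -/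
def alphaT (t : ℝ) : ℝ := Real.exp (-t / 2)

/-- `σ_t = √(1 - e^{-t})`. -/
def sigmaT (t : ℝ) : ℝ := Real.sqrt (1 - Real.exp (-t))

/-- The Gaussian transition kernel: the density of `N(α_t z, σ_t² I_d)` at `x`. -/
def gaussKernel (d : ℕ) (t : ℝ) (z x : Fin d → ℝ) : ℝ :=
  (sigmaT t ^ d * (2 * Real.pi) ^ ((d : ℝ) / 2))⁻¹ *
    Real.exp (-(norm2 (fun i => alphaT t * z i - x i)) ^ 2 / (2 * sigmaT t ^ 2))

/-- The diffused conditional density `p_t(x|y)`. -/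
def diffDensity (d dy : ℕ) (p : (Fin d → ℝ) → (Fin dy → ℝ) → ℝ) (t : ℝ)
    (x : Fin d → ℝ) (y : Fin dy → ℝ) : ℝ :=
  ∫ z : Fin d → ℝ, p z y * gaussKernel d t z x

/-- The conditional score `∇_x log p_t(x|y)`. -/
def score (d dy : ℕ) (p : (Fin d → ℝ) → (Fin dy → ℝ) → ℝ) (t : ℝ)
    (x : Fin d → ℝ) (y : Fin dy → ℝ) : Fin d → ℝ :=
  fun i => fderiv ℝ (fun x' => Real.log (diffDensity d dy p t x' y)) x (Pi.single i 1)

/-- The partial derivative in the `i`-th coordinate direction. -/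
def pderiv (D : ℕ) (i : Fin D) (f : (Fin D → ℝ) → ℝ) : (Fin D → ℝ) → ℝ :=
  fun x => fderiv ℝ f x (Pi.single i 1)

/-- The multi-index partial derivative `∂^k f`. -/
def multiDeriv (D : ℕ) (k : Fin D → ℕ) : ((Fin D → ℝ) → ℝ) → ((Fin D → ℝ) → ℝ) :=
  (List.ofFn fun i : Fin D => (pderiv D i)^[k i]).foldr (· ∘ ·) id

/-- Membership in the Hölder ball `H^β(ℝ^D, B)`: `f` is `⌊β⌋`-times differentiable and
its Hölder norm is `< B`. -/
def MemHolderBall (D : ℕ) (β B : ℝ) (f : (Fin D → ℝ) → ℝ) : Prop :=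
  ContDiff ℝ (⌊β⌋₊ : ℕ) f ∧
  ∃ b₁ b₂ : ℝ, b₁ + b₂ < B ∧
    (∀ k : Fin D → ℕ, (∑ i, k i) ≤ ⌊β⌋₊ → ∀ x, |multiDeriv D k f x| ≤ b₁) ∧
    (∀ k : Fin D → ℕ, (∑ i, k i) = ⌊β⌋₊ → ∀ x z, x ≠ z →
      |multiDeriv D k f x - multiDeriv D k f z| ≤
        b₂ * normInf (x - z) ^ (β - (⌊β⌋₊ : ℝ)))

/-- `y ∈ [0,1]^{d_y}`. -/
def InUnitCube (dy : ℕ) (y : Fin dy → ℝ) : Prop := ∀ i, y i ∈ Set.Icc (0 : ℝ) 1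

/-- Assumption (A1): `p(·|y)` is a conditional probability density, `(x,y) ↦ p(x|y)`
agrees on `ℝ^d × [0,1]^{d_y}` with a function in the Hölder ball `H^β(ℝ^{d+d_y}, B)`,
and `p(x|y) ≤ C₁ exp(-C₂‖x‖₂²/2)`. -/
structure AssumptionA1 (d dy : ℕ) (β B C₁ C₂ : ℝ)
    (p : (Fin d → ℝ) → (Fin dy → ℝ) → ℝ) : Prop where
  beta_pos : 0 < β
  B_pos : 0 < B
  C1_pos : 0 < C₁
  C2_pos : 0 < C₂
  nonneg : ∀ x y, InUnitCube dy y → 0 ≤ p x y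
  total_mass : ∀ y, InUnitCube dy y → (∫ x, p x y) = 1
  holder : ∃ q : (Fin (d + dy) → ℝ) → ℝ, MemHolderBall (d + dy) β B q ∧
    ∀ (x : Fin d → ℝ) (y : Fin dy → ℝ), InUnitCube dy y → p x y = q (Fin.append x y)
  tail : ∀ x y, InUnitCube dy y → p x y ≤ C₁ * Real.exp (-C₂ * norm2 x ^ 2 / 2)

/-- The conditional density of Assumption (A2): `p(x|y) = exp(-C₂‖x‖₂²/2)·f(x,y)`. -/
def densityA2 (d dy : ℕ) (C₂ : ℝ) (f : (Fin d → ℝ) → (Fin dy → ℝ) → ℝ) :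
    (Fin d → ℝ) → (Fin dy → ℝ) → ℝ :=
  fun x y => Real.exp (-C₂ * norm2 x ^ 2 / 2) * f x y

/-- Assumption (A2): `p(x|y) = exp(-C₂‖x‖₂²/2)·f(x,y)` is a conditional probability
density, where `f` agrees on `ℝ^d × [0,1]^{d_y}` with a function in the Hölder ball
`H^β(ℝ^{d+d_y}, B)` and `f ≥ C > 0`. -/
structure AssumptionA2 (d dy : ℕ) (β B C C₂ : ℝ)
    (f : (Fin d → ℝ) → (Fin dy → ℝ) → ℝ) : Prop where
  beta_pos : 0 < β
  B_pos : 0 < B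
  C_pos : 0 < C
  C2_pos : 0 < C₂
  holder : ∃ q : (Fin (d + dy) → ℝ) → ℝ, MemHolderBall (d + dy) β B q ∧
    ∀ (x : Fin d → ℝ) (y : Fin dy → ℝ), InUnitCube dy y → f x y = q (Fin.append x y)
  lower : ∀ x y, InUnitCube dy y → C ≤ f x y
  total_mass : ∀ y, InUnitCube dy y → (∫ x, densityA2 d dy C₂ f x y) = 1

/-- `σ̂_t = σ_t/√(α_t² + C₂σ_t²)`. -/
def sigmaHat (C₂ t : ℝ) : ℝ := sigmaT t / Real.sqrt (alphaT t ^ 2 + C₂ * sigmaT t ^ 2)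

/-- `α̂_t = α_t/(α_t² + C₂σ_t²)`. -/
def alphaHat (C₂ t : ℝ) : ℝ := alphaT t / (alphaT t ^ 2 + C₂ * sigmaT t ^ 2)

/-- `h(x,y,t) = ∫ f(z,y) (2π)^{-d/2} σ̂_t^{-d} exp(-‖z - α̂_t x‖²/(2σ̂_t²)) dz`. -/
def hFun (d dy : ℕ) (C₂ : ℝ) (f : (Fin d → ℝ) → (Fin dy → ℝ) → ℝ) (t : ℝ)
    (x : Fin d → ℝ) (y : Fin dy → ℝ) : ℝ :=
  ∫ z : Fin d → ℝ, f z y * ((2 * Real.pi) ^ ((d : ℝ) / 2) * sigmaHat C₂ t ^ d)⁻¹ *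
    Real.exp (-(norm2 (fun i => z i - alphaHat C₂ t * x i)) ^ 2 / (2 * sigmaHat C₂ t ^ 2))

/-- The total variation distance between two measures. -/
def tvDist {α : Type*} [MeasurableSpace α] (μ ν : Measure α) : ℝ :=
  ⨆ A : {A : Set α // MeasurableSet A}, |(μ A.1).toReal - (ν A.1).toReal|

/-- The classifier-free guidance loss `ℓ(x,y;s)`. -/
def cfLoss (d dy : ℕ) (t₀ T : ℝ)
    (s₁ : (Fin d → ℝ) → (Fin dy → ℝ) → ℝ → Fin d → ℝ)
    (s₂ : (Fin d → ℝ) → ℝ → Fin d → ℝ)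
    (x : Fin d → ℝ) (y : Fin dy → ℝ) : ℝ :=
  ∫ t in t₀..T, (T - t₀)⁻¹ *
    ∫ x' : Fin d → ℝ, gaussKernel d t x x' *
      ((1 / 2) * norm2 (fun i => s₁ x' y t i + (x' i - alphaT t * x i) / sigmaT t ^ 2) ^ 2 +
       (1 / 2) * norm2 (fun i => s₂ x' t i + (x' i - alphaT t * x i) / sigmaT t ^ 2) ^ 2)

/-- The empirical classifier-free risk `𝓛̂(s)` on a sample of size `n`. -/
def empRisk (d dy n : ℕ) (t₀ T : ℝ)
    (s₁ : (Fin d → ℝ) → (Fin dy → ℝ) → ℝ → Fin d → ℝ)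
    (s₂ : (Fin d → ℝ) → ℝ → Fin d → ℝ)
    (ω : Fin n → (Fin d → ℝ) × (Fin dy → ℝ)) : ℝ :=
  (n : ℝ)⁻¹ * ∑ i, cfLoss d dy t₀ T s₁ s₂ (ω i).1 (ω i).2

/-- The conditional score risk `𝓡(s₁)`. -/
def condRisk (d dy : ℕ) (p : (Fin d → ℝ) → (Fin dy → ℝ) → ℝ)
    (Py : Measure (Fin dy → ℝ)) (t₀ T : ℝ)
    (s₁ : (Fin d → ℝ) → (Fin dy → ℝ) → ℝ → Fin d → ℝ) : ℝ :=
  ∫ t in t₀..T, (T - t₀)⁻¹ *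
    ∫ y, (∫ x : Fin d → ℝ,
      norm2 (fun i => s₁ x y t i - score d dy p t x y i) ^ 2 *
        diffDensity d dy p t x y) ∂Py

/-- The density class `𝓟` of Proposition 4.5. -/
def PClass (d : ℕ) (β B C C₂ : ℝ) : Set ((Fin d → ℝ) → ℝ) :=
  {p | (∀ x, 0 ≤ p x) ∧ (∫ x, p x) = 1 ∧
    ∃ f : (Fin d → ℝ) → ℝ, MemHolderBall d β B f ∧ (∀ x, C ≤ f x) ∧
      ∀ x, p x = f x * Real.exp (-C₂ * norm2 x ^ 2)}

/-!
After completing the square in the exponent, `h(·, y, t)` is the Gaussian smoothing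
`u ↦ ∫ g(z) φ(z - u) dz` of `g = f(·, y)` evaluated at `u = α̂_t x`, where `φ` is the density
of `N(0, σ̂_t² I_d)`. Since `φ` is a probability density and `C ≤ g ≤ B` (the Hölder norm
bounds `sup |g|`), also `C ≤ h ≤ B`.
Differentiating under the integral sign, `∂_i h = α̂_t ∫ g(z) φ(z - u) (z_i - u_i) / σ̂_t² dz`,
hence `|∂_i h| ≤ α̂_t B E|Z_i| / σ̂_t²` with `Z ~ N(0, σ̂_t² I_d)`, and `E|Z_i| = σ̂_t √(2/π)`.
-/

open Real ProbabilityTheory Set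
open scoped NNReal

section GaussianReal

variable {v : ℝ≥0}

lemma integral_Ioi_mul_exp_neg_mul_sq {b : ℝ} (hb : 0 < b) :
    ∫ r in Ioi (0 : ℝ), r * exp (-b * r ^ 2) = (2 * b)⁻¹ := by
  have h := integral_mul_cexp_neg_mul_sq (b := (b : ℂ)) (by simpa using hb)
  have : ((∫ r in Ioi (0 : ℝ), r * exp (-b * r ^ 2) : ℝ) : ℂ) = ((2 * b)⁻¹ : ℝ) := by
    rw [← integral_complex_ofReal]
    push_cast
    exact h
  exact_mod_cast this

lemma integrable_abs_mul_gaussianPDFReal (v : ℝ≥0) :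
    Integrable fun x => |x| * gaussianPDFReal 0 v x := by
  rcases eq_or_ne v 0 with rfl | hv
  · simp
  have hb : 0 < (2 * (v : ℝ))⁻¹ := by positivity
  refine ((integrable_mul_exp_neg_mul_sq hb).norm.const_mul (√(2 * π * v))⁻¹).congr
    (ae_of_all _ fun x => ?_)
  simp only [gaussianPDFReal, norm_mul, Real.norm_eq_abs, abs_exp, sub_zero]
  ring_nf

lemma integral_abs_mul_gaussianPDFReal (v : ℝ≥0) :
    ∫ x, |x| * gaussianPDFReal 0 v x = √(2 * v / π) := by
  rcases eq_or_ne v 0 with rfl | hv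
  · simp
  have hv' : (0 : ℝ) < v := by positivity
  have hb : 0 < (2 * (v : ℝ))⁻¹ := by positivity
  have heven : ∫ x, |x| * gaussianPDFReal 0 v x
      = 2 * ∫ x in Ioi (0 : ℝ), x * gaussianPDFReal 0 v x := by
    rw [← integral_comp_abs (f := fun x => x * gaussianPDFReal 0 v x)]
    simp [gaussianPDFReal]
  have hIoi : ∫ x in Ioi (0 : ℝ), x * gaussianPDFReal 0 v x
      = (√(2 * π * v))⁻¹ * ∫ x in Ioi (0 : ℝ), x * exp (-(2 * (v : ℝ))⁻¹ * x ^ 2) := by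
    rw [← integral_const_mul]
    congr 1 with x
    simp only [gaussianPDFReal, sub_zero]
    ring_nf
  rw [heven, hIoi, integral_Ioi_mul_exp_neg_mul_sq hb,
    show (2 : ℝ) * v / π = (2 * v) ^ 2 / (2 * π * v) by field_simp,
    Real.sqrt_div' _ (by positivity), Real.sqrt_sq (by positivity)]
  field_simp

lemma gaussianPDFReal_sub_le (hv : v ≠ 0) {r δ : ℝ} (hδ : |δ| ≤ r) (u : ℝ) :
    gaussianPDFReal 0 v (u - δ) ≤ √2 * exp (r ^ 2 / (2 * v)) * gaussianPDFReal 0 (2 * v) u := by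
  have hv' : (0 : ℝ) < v := by positivity
  have hsq : u ^ 2 / 2 - r ^ 2 ≤ (u - δ) ^ 2 := by
    have : δ ^ 2 ≤ r ^ 2 := by simpa using pow_le_pow_left₀ (abs_nonneg δ) hδ 2
    nlinarith [sq_nonneg (u - 2 * δ)]
  have hsqrt : √(2 * π * ((2 * v : ℝ≥0) : ℝ)) = √2 * √(2 * π * v) := by
    rw [← Real.sqrt_mul (by norm_num)]; push_cast; ring_nf
  simp only [gaussianPDFReal, sub_zero, hsqrt]
  have hexp : -(u - δ) ^ 2 / (2 * v) ≤ r ^ 2 / (2 * v) + -u ^ 2 / (2 * ↑(2 * v)) := by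
    push_cast
    rw [← sub_nonneg]
    have : r ^ 2 / (2 * v) + -u ^ 2 / (2 * (2 * v)) - -(u - δ) ^ 2 / (2 * (v : ℝ))
        = ((u - δ) ^ 2 - (u ^ 2 / 2 - r ^ 2)) / (2 * v) := by field_simp; ring
    rw [this]
    exact div_nonneg (by linarith) (by positivity)
  calc (√(2 * π * ↑v))⁻¹ * rexp (-(u - δ) ^ 2 / (2 * ↑v))
      ≤ (√(2 * π * ↑v))⁻¹ * rexp (r ^ 2 / (2 * v) + -u ^ 2 / (2 * ↑(2 * v))) := by gcongr
    _ = _ := by rw [exp_add]; field_simp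

end GaussianReal

section GaussianPi

variable {ι : Type*} [Fintype ι] {v : ℝ≥0}

def dotCLM (w : ι → ℝ) : (ι → ℝ) →L[ℝ] ℝ := ∑ i, w i • ContinuousLinearMap.proj i

@[simp]
lemma dotCLM_apply (w e : ι → ℝ) : dotCLM w e = ∑ i, w i * e i := by
  simp [dotCLM]

lemma norm_dotCLM_le (w : ι → ℝ) : ‖dotCLM w‖ ≤ ∑ i, |w i| :=
  ContinuousLinearMap.opNorm_le_bound _ (by positivity) fun e => by
    rw [dotCLM_apply, Real.norm_eq_abs, Finset.sum_mul]
    refine (Finset.abs_sum_le_sum_abs _ _).trans (Finset.sum_le_sum fun i _ => ?_)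
    rw [abs_mul]
    gcongr
    exact norm_le_pi_norm e i

lemma continuous_dotCLM : Continuous (dotCLM (ι := ι)) := by
  unfold dotCLM
  fun_prop

def gaussianPDFPi (v : ℝ≥0) (w : ι → ℝ) : ℝ := ∏ i, gaussianPDFReal 0 v (w i)

lemma gaussianPDFPi_nonneg (v : ℝ≥0) (w : ι → ℝ) : 0 ≤ gaussianPDFPi v w :=
  Finset.prod_nonneg fun _ _ => gaussianPDFReal_nonneg _ _ _

lemma gaussianPDFPi_eq (v : ℝ≥0) (w : ι → ℝ) :
    gaussianPDFPi v w
      = (√(2 * π * v))⁻¹ ^ Fintype.card ι * exp (-(2 * (v : ℝ))⁻¹ * ∑ i, w i ^ 2) := by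
  simp only [gaussianPDFPi, gaussianPDFReal, sub_zero, Finset.prod_mul_distrib,
    Finset.prod_const, ← Real.exp_sum, Finset.mul_sum]
  rw [Finset.card_univ]
  congr 2
  exact Finset.sum_congr rfl fun i _ => by ring

lemma integrable_gaussianPDFPi (v : ℝ≥0) : Integrable (gaussianPDFPi (ι := ι) v) :=
  Integrable.fintype_prod fun _ => integrable_gaussianPDFReal 0 v

lemma integral_gaussianPDFPi (hv : v ≠ 0) : ∫ w, gaussianPDFPi (ι := ι) v w = 1 := by
  simp [gaussianPDFPi, integral_fintype_prod_volume_eq_pow, integral_gaussianPDFReal_eq_one 0 hv]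

lemma hasFDerivAt_gaussianPDFPi (v : ℝ≥0) (w : ι → ℝ) :
    HasFDerivAt (gaussianPDFPi v) (-(gaussianPDFPi v w / v) • dotCLM w) w := by
  have hsum : HasFDerivAt (fun w : ι → ℝ => ∑ i, w i ^ 2)
      (∑ i, (2 * w i) • ContinuousLinearMap.proj (R := ℝ) (φ := fun _ : ι => ℝ) i) w :=
    HasFDerivAt.fun_sum fun i _ => by simpa using ((hasFDerivAt_apply (𝕜 := ℝ) i w).pow 2)
  have h := ((hsum.const_mul (-(2 * (v : ℝ))⁻¹)).exp.const_mul
    ((√(2 * π * v))⁻¹ ^ Fintype.card ι))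
  rw [show gaussianPDFPi v = _ from funext (gaussianPDFPi_eq v)]
  refine h.congr_fderiv ?_
  ext e
  simp [Finset.mul_sum]
  exact Finset.sum_congr rfl fun i _ => by field_simp

lemma gaussianPDFPi_sub_le (hv : v ≠ 0) {r : ℝ} {δ : ι → ℝ} (hδ : ∀ i, |δ i| ≤ r) (w : ι → ℝ) :
    gaussianPDFPi v (w - δ)
      ≤ (√2 * exp (r ^ 2 / (2 * v))) ^ Fintype.card ι * gaussianPDFPi (2 * v) w := by
  rw [gaussianPDFPi, gaussianPDFPi, ← Finset.card_univ, ← Finset.prod_const,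
    ← Finset.prod_mul_distrib]
  exact Finset.prod_le_prod (fun i _ => (gaussianPDFReal_nonneg _ _ _))
    fun i _ => gaussianPDFReal_sub_le hv (hδ i) (w i)

lemma gaussianPDFPi_sub_mul_sum_abs_le (hv : v ≠ 0) {r : ℝ} {δ : ι → ℝ} (hδ : ∀ i, |δ i| ≤ r)
    (w : ι → ℝ) :
    gaussianPDFPi v (w - δ) * ∑ i, |(w - δ) i|
      ≤ (√2 * exp (r ^ 2 / (2 * v))) ^ Fintype.card ι *
          ∑ i, (|w i| * gaussianPDFPi (2 * v) w + r * gaussianPDFPi (2 * v) w) := by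
  have hsum : ∑ i, |(w - δ) i| ≤ ∑ i, (|w i| + r) :=
    Finset.sum_le_sum fun i _ => (abs_sub (w i) (δ i)).trans (add_le_add_right (hδ i) _)
  calc gaussianPDFPi v (w - δ) * ∑ i, |(w - δ) i|
      ≤ ((√2 * exp (r ^ 2 / (2 * v))) ^ Fintype.card ι * gaussianPDFPi (2 * v) w) *
          ∑ i, (|w i| + r) := by
        refine mul_le_mul (gaussianPDFPi_sub_le hv hδ w) hsum
          (Finset.sum_nonneg fun i _ => abs_nonneg _) ?_
        exact mul_nonneg (by positivity) (gaussianPDFPi_nonneg _ _)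
    _ = _ := by
      simp only [mul_assoc, Finset.mul_sum]
      exact Finset.sum_congr rfl fun i _ => by ring

lemma abs_mul_gaussianPDFPi [DecidableEq ι] (v : ℝ≥0) (j : ι) (w : ι → ℝ) :
    |w j| * gaussianPDFPi v w
      = ∏ i, Function.update (fun _ => gaussianPDFReal 0 v)
          j (fun x => |x| * gaussianPDFReal 0 v x) i (w i) := by
  rw [gaussianPDFPi, Fintype.prod_eq_mul_prod_compl j, Fintype.prod_eq_mul_prod_compl j,
    Function.update_self, mul_assoc]
  congr 2
  exact Finset.prod_congr rfl fun i hi =>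
    by rw [Function.update_of_ne (by simpa using hi)]

lemma integrable_abs_mul_gaussianPDFPi (v : ℝ≥0) (j : ι) :
    Integrable fun w : ι → ℝ => |w j| * gaussianPDFPi v w := by
  classical
  simp_rw [abs_mul_gaussianPDFPi]
  refine Integrable.fintype_prod fun i => ?_
  rcases eq_or_ne i j with rfl | h
  · simpa using integrable_abs_mul_gaussianPDFReal v
  · simpa [h] using integrable_gaussianPDFReal 0 v

lemma integral_abs_mul_gaussianPDFPi (hv : v ≠ 0) (j : ι) :
    ∫ w : ι → ℝ, |w j| * gaussianPDFPi v w = √(2 * v / π) := by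
  classical
  simp_rw [abs_mul_gaussianPDFPi]
  rw [integral_fintype_prod_volume_eq_prod, Fintype.prod_eq_mul_prod_compl j,
    Function.update_self, integral_abs_mul_gaussianPDFReal, Finset.prod_eq_one, mul_one]
  intro i hi
  rw [Function.update_of_ne (by simpa using hi),
    integral_gaussianPDFReal_eq_one 0 hv]

lemma integrable_sum_abs_add_mul_gaussianPDFPi (v : ℝ≥0) (r : ℝ) :
    Integrable fun w : ι → ℝ => ∑ i, (|w i| * gaussianPDFPi v w + r * gaussianPDFPi v w) :=
  integrable_finsetSum _ fun i _ =>
    (integrable_abs_mul_gaussianPDFPi v i).add ((integrable_gaussianPDFPi v).const_mul r)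

end GaussianPi

section GaussianSmoothing

open Filter

variable {ι : Type*} [Fintype ι] {v : ℝ≥0} {g : (ι → ℝ) → ℝ} {M : ℝ}

def gaussianSmoothing (v : ℝ≥0) (g : (ι → ℝ) → ℝ) (u : ι → ℝ) : ℝ :=
  ∫ z, g z * gaussianPDFPi v (z - u)

lemma integrable_mul_gaussianPDFPi_sub (hg : AEStronglyMeasurable g) (hgM : ∀ z, |g z| ≤ M)
    (u : ι → ℝ) : Integrable fun z => g z * gaussianPDFPi v (z - u) :=
  ((integrable_gaussianPDFPi v).comp_sub_right u).bdd_mul hg (ae_of_all _ hgM)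

lemma le_gaussianSmoothing (hv : v ≠ 0) (hg : AEStronglyMeasurable g) (hgM : ∀ z, |g z| ≤ M)
    {C : ℝ} (hgC : ∀ z, C ≤ g z) (u : ι → ℝ) : C ≤ gaussianSmoothing v g u := by
  calc C = ∫ z, C * gaussianPDFPi v (z - u) := by
        rw [integral_const_mul, integral_sub_right_eq_self, integral_gaussianPDFPi hv, mul_one]
    _ ≤ gaussianSmoothing v g u :=
        integral_mono (((integrable_gaussianPDFPi v).comp_sub_right u).const_mul C)
          (integrable_mul_gaussianPDFPi_sub hg hgM u)
          fun z => mul_le_mul_of_nonneg_right (hgC z) (gaussianPDFPi_nonneg _ _)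

lemma gaussianSmoothing_le (hv : v ≠ 0) (hg : AEStronglyMeasurable g) (hgM : ∀ z, |g z| ≤ M)
    (u : ι → ℝ) : gaussianSmoothing v g u ≤ M := by
  calc gaussianSmoothing v g u ≤ ∫ z, M * gaussianPDFPi v (z - u) :=
        integral_mono (integrable_mul_gaussianPDFPi_sub hg hgM u)
          (((integrable_gaussianPDFPi v).comp_sub_right u).const_mul M)
          fun z => mul_le_mul_of_nonneg_right ((le_abs_self _).trans (hgM z))
            (gaussianPDFPi_nonneg _ _)
    _ = M := by
        rw [integral_const_mul, integral_sub_right_eq_self, integral_gaussianPDFPi hv, mul_one]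

lemma hasFDerivAt_mul_gaussianPDFPi_sub (c : ℝ) (z u : ι → ℝ) :
    HasFDerivAt (fun u => c * gaussianPDFPi v (z - u))
      ((c * gaussianPDFPi v (z - u) / v) • dotCLM (z - u)) u := by
  have h := ((hasFDerivAt_gaussianPDFPi v (z - u)).comp u
    ((hasFDerivAt_id u).const_sub z)).const_mul c
  refine h.congr_fderiv ?_
  ext e
  simp
  ring

lemma norm_mul_gaussianPDFPi_sub_smul_le (hgM : ∀ z, |g z| ≤ M) (z u : ι → ℝ) :
    ‖(g z * gaussianPDFPi v (z - u) / v) • dotCLM (z - u)‖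
      ≤ M / v * (gaussianPDFPi v (z - u) * ∑ i, |(z - u) i|) := by
  rw [norm_smul, Real.norm_eq_abs, abs_div, abs_mul, abs_of_nonneg (gaussianPDFPi_nonneg _ _),
    NNReal.abs_eq, mul_div_right_comm, mul_assoc]
  exact mul_le_mul (div_le_div_of_nonneg_right (hgM z) v.2)
    (mul_le_mul_of_nonneg_left (norm_dotCLM_le _) (gaussianPDFPi_nonneg _ _))
    (mul_nonneg (gaussianPDFPi_nonneg _ _) (norm_nonneg _))
    (div_nonneg ((abs_nonneg _).trans (hgM z)) v.2)

lemma integrable_mul_gaussianPDFPi_sub_smul (hg : AEStronglyMeasurable g)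
    (hgM : ∀ z, |g z| ≤ M) (u : ι → ℝ) :
    Integrable fun z => (g z * gaussianPDFPi v (z - u) / v) • dotCLM (z - u) := by
  refine Integrable.mono' (g := fun z => M / v * (gaussianPDFPi v (z - u) * ∑ i, |(z - u) i|))
    ?_ ?_ (ae_of_all _ (norm_mul_gaussianPDFPi_sub_smul_le hgM · u))
  · have h : Integrable fun z => ∑ i, |(z - u) i| * gaussianPDFPi v (z - u) :=
      integrable_finsetSum _ fun i _ => (integrable_abs_mul_gaussianPDFPi v i).comp_sub_right u
    refine (h.const_mul (M / v)).congr (ae_of_all _ fun z => ?_)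
    simp only [Finset.mul_sum, mul_comm]
  · exact ((integrable_mul_gaussianPDFPi_sub hg hgM u).aestronglyMeasurable.mul_const
      (v : ℝ)⁻¹).smul (continuous_dotCLM.comp (continuous_sub_right u)).aestronglyMeasurable

theorem hasFDerivAt_gaussianSmoothing (hv : v ≠ 0) (hg : AEStronglyMeasurable g)
    (hgM : ∀ z, |g z| ≤ M) (u₀ : ι → ℝ) :
    HasFDerivAt (gaussianSmoothing v g)
      (∫ z, (g z * gaussianPDFPi v (z - u₀) / v) • dotCLM (z - u₀)) u₀ := by
  -- On the unit ball around `u₀`, the shifted kernel is dominated by the kernel of variance `2v`.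
  set K := (√2 * exp (1 ^ 2 / (2 * v))) ^ Fintype.card ι
  have hbound : ∀ z, ∀ u ∈ Metric.ball u₀ 1,
      ‖(g z * gaussianPDFPi v (z - u) / v) • dotCLM (z - u)‖
      ≤ M / v * (K * ∑ i, (|(z - u₀) i| * gaussianPDFPi (2 * v) (z - u₀)
          + 1 * gaussianPDFPi (2 * v) (z - u₀))) := by
    intro z u hu
    rw [Metric.mem_ball, dist_eq_norm] at hu
    have hG := gaussianPDFPi_sub_mul_sum_abs_le hv
      (fun i => (norm_le_pi_norm (u - u₀) i).trans hu.le) (z - u₀)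
    rw [sub_sub_sub_cancel_right] at hG
    have hM : 0 ≤ M := (abs_nonneg _).trans (hgM 0)
    exact (norm_mul_gaussianPDFPi_sub_smul_le hgM z u).trans (by gcongr)
  exact hasFDerivAt_integral_of_dominated_of_fderiv_le (Metric.ball_mem_nhds u₀ one_pos)
    (Eventually.of_forall fun u => (integrable_mul_gaussianPDFPi_sub hg hgM u).aestronglyMeasurable)
    (integrable_mul_gaussianPDFPi_sub hg hgM u₀)
    (integrable_mul_gaussianPDFPi_sub_smul hg hgM u₀).aestronglyMeasurable
    (ae_of_all _ hbound)
    (((integrable_sum_abs_add_mul_gaussianPDFPi (2 * v) 1).comp_sub_right u₀).const_mul K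
      |>.const_mul _)
    (ae_of_all _ fun z u _ => hasFDerivAt_mul_gaussianPDFPi_sub (g z) z u)

theorem sqrt_mul_abs_fderiv_gaussianSmoothing_le [DecidableEq ι] (hv : v ≠ 0)
    (hg : AEStronglyMeasurable g) (hgM : ∀ z, |g z| ≤ M) (u : ι → ℝ) (j : ι) :
    √v * |fderiv ℝ (gaussianSmoothing v g) u (Pi.single j 1)| ≤ √(2 / π) * M := by
  rw [(hasFDerivAt_gaussianSmoothing hv hg hgM u).fderiv,
    ContinuousLinearMap.integral_apply (integrable_mul_gaussianPDFPi_sub_smul hg hgM u)]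
  have happly : ∀ z : ι → ℝ, ((g z * gaussianPDFPi v (z - u) / v) • dotCLM (z - u)) (Pi.single j 1)
      = g z * gaussianPDFPi v (z - u) / v * (z - u) j := by
    intro z; simp [Pi.single_apply]
  have hpt : ∀ z : ι → ℝ, ‖g z * gaussianPDFPi v (z - u) / v * (z - u) j‖
      ≤ M / v * (|(z - u) j| * gaussianPDFPi v (z - u)) := by
    intro z
    rw [Real.norm_eq_abs, abs_mul, abs_div, abs_mul, abs_of_nonneg (gaussianPDFPi_nonneg _ _),
      NNReal.abs_eq]
    have := gaussianPDFPi_nonneg v (z - u)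
    have := abs_nonneg ((z - u) j)
    calc |g z| * gaussianPDFPi v (z - u) / v * |(z - u) j|
        = |g z| / v * (|(z - u) j| * gaussianPDFPi v (z - u)) := by ring
      _ ≤ _ := by gcongr; exact hgM z
  have hv' : (0 : ℝ) < v := by positivity
  simp only [happly]
  calc √v * |∫ z, g z * gaussianPDFPi v (z - u) / v * (z - u) j|
      ≤ √v * ∫ z, M / v * (|(z - u) j| * gaussianPDFPi v (z - u)) := by
        gcongr
        exact norm_integral_le_of_norm_le
          (((integrable_abs_mul_gaussianPDFPi v j).comp_sub_right u).const_mul _)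
          (ae_of_all _ hpt)
    _ = √v * (M / v * √(2 * v / π)) := by
        rw [integral_const_mul,
          integral_sub_right_eq_self (fun w => |w j| * gaussianPDFPi v w) u,
          integral_abs_mul_gaussianPDFPi hv]
    _ = √(2 / π) * M := by
        rw [Real.sqrt_div' _ Real.pi_pos.le, Real.sqrt_div' _ Real.pi_pos.le,
          Real.sqrt_mul zero_le_two]
        field_simp
        rw [Real.sq_sqrt hv'.le, mul_comm]

end GaussianSmoothing

lemma multiDeriv_zero (D : ℕ) (f : (Fin D → ℝ) → ℝ) : multiDeriv D 0 f = f := by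
  have h : ∀ n, (List.replicate n (id : ((Fin D → ℝ) → ℝ) → (Fin D → ℝ) → ℝ)).foldr (· ∘ ·) id
      = id := fun n => by induction n <;> simp_all [List.replicate_succ]
  simp [multiDeriv, h]

lemma MemHolderBall.abs_lt {D : ℕ} {β B : ℝ} {f : (Fin D → ℝ) → ℝ} (hD : 0 < D)
    (hf : MemHolderBall D β B f) (x : Fin D → ℝ) : |f x| < B := by
  obtain ⟨-, b₁, b₂, hb, hb₁, hb₂⟩ := hf
  have : Nonempty (Fin D) := ⟨⟨0, hD⟩⟩
  have hb₂ : 0 ≤ b₂ := by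
    have h := hb₂ (Pi.single ⟨0, hD⟩ ⌊β⌋₊) (by simp) 0 1 zero_ne_one
    have hnorm : normInf ((0 : Fin D → ℝ) - 1) = 1 := by simp [normInf]
    rw [hnorm, Real.one_rpow, mul_one] at h
    exact (abs_nonneg _).trans h
  have h := hb₁ 0 (by simp) x
  rw [multiDeriv_zero] at h
  linarith

lemma sigmaT_pos {t : ℝ} (ht : 0 < t) : 0 < sigmaT t :=
  Real.sqrt_pos.2 (sub_pos.2 (Real.exp_lt_one_iff.2 (neg_lt_zero.2 ht)))

lemma alphaT_sq_add_mul_sigmaT_sq_pos {C₂ : ℝ} (hC₂ : 0 ≤ C₂) (t : ℝ) :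
    0 < alphaT t ^ 2 + C₂ * sigmaT t ^ 2 := by
  have : 0 < alphaT t := Real.exp_pos _
  positivity

lemma sigmaHat_pos {C₂ t : ℝ} (hC₂ : 0 ≤ C₂) (ht : 0 < t) : 0 < sigmaHat C₂ t :=
  div_pos (sigmaT_pos ht) (Real.sqrt_pos.2 (alphaT_sq_add_mul_sigmaT_sq_pos hC₂ t))

lemma alphaHat_pos {C₂ : ℝ} (hC₂ : 0 ≤ C₂) (t : ℝ) : 0 < alphaHat C₂ t :=
  div_pos (Real.exp_pos _) (alphaT_sq_add_mul_sigmaT_sq_pos hC₂ t)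

lemma gaussianPDFPi_toNNReal_sq {d : ℕ} {s : ℝ} (hs : 0 < s) (w : Fin d → ℝ) :
    gaussianPDFPi (s ^ 2).toNNReal w
      = ((2 * π) ^ ((d : ℝ) / 2) * s ^ d)⁻¹ * exp (-(norm2 w) ^ 2 / (2 * s ^ 2)) := by
  rw [gaussianPDFPi_eq, Real.coe_toNNReal _ (sq_nonneg s), norm2,
    Real.sq_sqrt (Finset.sum_nonneg fun i _ => sq_nonneg _)]
  have h1 : √(2 * π * s ^ 2) = √(2 * π) * s := by
    rw [Real.sqrt_mul (by positivity), Real.sqrt_sq hs.le]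
  have h2 : (2 * π) ^ ((d : ℝ) / 2) = √(2 * π) ^ d := by
    rw [Real.sqrt_eq_rpow, ← Real.rpow_natCast, ← Real.rpow_mul (by positivity)]
    ring_nf
  rw [h1, h2, Fintype.card_fin, inv_pow, mul_pow]
  congr 2
  ring

lemma hFun_eq_gaussianSmoothing {d dy : ℕ} {C₂ t : ℝ} (hs : 0 < sigmaHat C₂ t)
    (f : (Fin d → ℝ) → (Fin dy → ℝ) → ℝ) (x : Fin d → ℝ) (y : Fin dy → ℝ) :
    hFun d dy C₂ f t x y
      = gaussianSmoothing (sigmaHat C₂ t ^ 2).toNNReal (f · y) (alphaHat C₂ t • x) := by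
  unfold hFun gaussianSmoothing
  congr 1 with z
  rw [mul_assoc, gaussianPDFPi_toNNReal_sq hs]
  rfl

theorem statement13_general
    (d dy : ℕ) (hd : 1 ≤ d)
    (β B C C₂ : ℝ)
    (f : (Fin d → ℝ) → (Fin dy → ℝ) → ℝ)
    (hA2 : AssumptionA2 d dy β B C C₂ f) :
    ∀ x : Fin d → ℝ, ∀ y : Fin dy → ℝ, InUnitCube dy y → ∀ t : ℝ, 0 < t →
      C ≤ hFun d dy C₂ f t x y ∧ hFun d dy C₂ f t x y ≤ B ∧
      ∀ i, |sigmaHat C₂ t / alphaHat C₂ t *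
          fderiv ℝ (fun x' => hFun d dy C₂ f t x' y) x (Pi.single i 1)|
        ≤ Real.sqrt (2 / Real.pi) * B := by
  intro x y hy t ht
  obtain ⟨q, hq, hfq⟩ := hA2.holder
  have hs := sigmaHat_pos hA2.C2_pos.le ht
  have ha := alphaHat_pos hA2.C2_pos.le t
  have hv : (sigmaHat C₂ t ^ 2).toNNReal ≠ 0 := by simpa using hs.ne'
  have hfy : (f · y) = fun z => q (Fin.append z y) := funext fun z => hfq z y hy
  have hg : AEStronglyMeasurable (f · y) := by
    rw [hfy]
    exact (hq.1.continuous.comp (by fun_prop)).aestronglyMeasurable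
  have hgB : ∀ z, |f z y| ≤ B := fun z => hfq z y hy ▸ (hq.abs_lt (by omega) _).le
  have hh : (fun x' => hFun d dy C₂ f t x' y)
      = fun x' => gaussianSmoothing (sigmaHat C₂ t ^ 2).toNNReal (f · y) (alphaHat C₂ t • x') :=
    funext fun x' => hFun_eq_gaussianSmoothing hs f x' y
  refine ⟨?_, ?_, fun i => ?_⟩
  · rw [hFun_eq_gaussianSmoothing hs]
    exact le_gaussianSmoothing hv hg hgB (hA2.lower · y hy) _
  · rw [hFun_eq_gaussianSmoothing hs]
    exact gaussianSmoothing_le hv hg hgB _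
  · have h := sqrt_mul_abs_fderiv_gaussianSmoothing_le hv hg hgB (alphaHat C₂ t • x) i
    rw [Real.coe_toNNReal _ (sq_nonneg _), Real.sqrt_sq hs.le] at h
    rw [hh, fderiv_comp_smul, FunLike.coe_smul, Pi.smul_apply, smul_eq_mul, ← mul_assoc,
      div_mul_cancel₀ _ ha.ne', abs_mul, abs_of_pos hs]
    exact h

/-- Lemma B.6: bounds on `h` and on its gradient under
Assumption (A2). -/
theorem statement13
    (d dy : ℕ) (hd : 1 ≤ d) (hdy : 1 ≤ dy)
    (β B C C₂ : ℝ)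
    (f : (Fin d → ℝ) → (Fin dy → ℝ) → ℝ)
    (hA2 : AssumptionA2 d dy β B C C₂ f) :
    ∀ x : Fin d → ℝ, ∀ y : Fin dy → ℝ, InUnitCube dy y → ∀ t : ℝ, 0 < t →
      C ≤ hFun d dy C₂ f t x y ∧ hFun d dy C₂ f t x y ≤ B ∧
      ∀ i, |sigmaHat C₂ t / alphaHat C₂ t *
          fderiv ℝ (fun x' => hFun d dy C₂ f t x' y) x (Pi.single i 1)|
        ≤ Real.sqrt (2 / Real.pi) * B :=
  statement13_general d dy hd β B C C₂ f hA2

end CDM
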